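/- arXiv:math/0603470 — 4 statements merged into one kernel-verified Lean document; each statement's English description precedes it below -/
import Mathlib

section
/- Let L be the graded Lie algebra over ℤ with generators B_{i,j}, 1 ≤ i < j ≤ n, in degree 1, and relations [B_{i,j}, B_{k,l}] = 0 for i,j,k,l distinct, [B_{i,j}, B_{i,k}] = 0 for i,j,k distinct, and [B_{j,k}, B_{i,j} + B_{i,k}] = 0 for i,j,k distinct (the Lie algebra gr_*(PΣ_n^+) of the upper triangular McCool group, with additive decomposition L ≅ ⊕_{k=2}^n L[V_k] where V_k = {B_{i,k} : 1 ≤ i < k} generates a free Lie subalgebra). Then the set of degree-1 elements X = Σ_{i<j} a_{i,j} B_{i,j} satisfying [X, B] = 0 for all B ∈ L[V_n] is exactly the ℤ-span of B_n = Σ_{j=2}^n B_{1,j}. -/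
open Finset

private lemma sum_lie' {L : Type*} [LieRing L] {ι : Type*} (s : Finset ι)
    (f : ι → L) (y : L) : ⁅∑ i ∈ s, f i, y⁆ = ∑ i ∈ s, ⁅f i, y⁆ := by
  induction s using Finset.cons_induction with
  | empty => simp
  | cons a s ha ih => rw [Finset.sum_cons, Finset.sum_cons, add_lie, ih]

private lemma zsmulLieAux {L : Type*} [LieRing L] [LieAlgebra ℤ L] (c : ℤ) (x y : L) :
    ⁅c • x, y⁆ = c • ⁅x, y⁆ := by
  induction c using Int.induction_on with
  | zero => simp
  | succ k ih => rw [add_smul, one_smul, add_lie, ih, add_smul, one_smul]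
  | pred k ih => rw [sub_smul, one_smul, sub_lie, ih, sub_smul, one_smul]

/-- In the Lie algebra `gr₊(PΣₙ⁺)` of the upper triangular McCool group — presented by
generators `B i j` (`i < j`) in degree 1 and the three families of relations below,
with the generators linearly independent and the weight-two brackets of the last
column `{⁅B i n, B j n⁆ : i < j < n}` linearly independent (as holds in the free Lie
algebra `L[Vₙ]` under the additive decomposition `L ≅ ⊕ₖ L[Vₖ]`) — the set of
degree-one elements `X = Σ_{i<j} a i j • B i j` satisfying `⁅X, B⁆ = 0` for all `B`
in the last column is exactly the `ℤ`-span of `Bₙ = Σ_{j>0} B 0 j`.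
(Indices run over `Fin (n+2)` and the last column is `Fin.last (n+1)`.) -/
theorem mccool_centralizer_degree_one (n : ℕ)
    (L : Type*) [LieRing L] [LieAlgebra ℤ L]
    (B : Fin (n + 2) → Fin (n + 2) → L)
    (h1 : ∀ i j k l : Fin (n + 2), i < j → k < l →
      i ≠ k → i ≠ l → j ≠ k → j ≠ l → ⁅B i j, B k l⁆ = 0)
    (h2 : ∀ i j k : Fin (n + 2), i < j → i < k → j ≠ k → ⁅B i j, B i k⁆ = 0)
    (h3 : ∀ i j k : Fin (n + 2), i < j → j < k → ⁅B j k, B i j + B i k⁆ = 0)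
    (hgen : LinearIndependent ℤ
      (fun p : {q : Fin (n + 2) × Fin (n + 2) // q.1 < q.2} => B p.1.1 p.1.2))
    (hbr : LinearIndependent ℤ
      (fun p : {q : Fin (n + 2) × Fin (n + 2) // q.1 < q.2 ∧ q.2 < Fin.last (n + 1)} =>
        ⁅B p.1.1 (Fin.last (n + 1)), B p.1.2 (Fin.last (n + 1))⁆)) :
    {X : L | (∃ a : Fin (n + 2) → Fin (n + 2) → ℤ,
        X = ∑ i, ∑ j ∈ univ.filter (fun j => i < j), a i j • B i j) ∧
      ∀ s : Fin (n + 2), s < Fin.last (n + 1) → ⁅X, B s (Fin.last (n + 1))⁆ = 0} =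
    {X : L | ∃ c : ℤ,
      X = c • ∑ j ∈ univ.filter (fun j : Fin (n + 2) => 0 < j), B 0 j} := by
  set N : Fin (n + 2) := Fin.last (n + 1) with hNdef
  have h0N : (0 : Fin (n + 2)) < N := Fin.last_pos
  have hb1 : ∀ s i j : Fin (n + 2), s < N → i < j → j ≠ s → j ≠ N →
      ⁅B i j, B s N⁆ = 0 := by
    intro s i j hs hij hjs hjN
    by_cases his : i = s
    · subst his
      exact h2 i j N hij hs hjN
    · exact h1 i j s N hij hs his (ne_of_lt (lt_of_lt_of_le hij (Fin.le_last j)))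
        hjs hjN
  have hb2 : ∀ s i : Fin (n + 2), s < N → i < s →
      ⁅B i s, B s N⁆ = -⁅B i N, B s N⁆ := by
    intro s i hs his
    have h := h3 i s N his hs
    rw [lie_add] at h
    have h' : ⁅B s N, B i s⁆ = -⁅B s N, B i N⁆ := eq_neg_of_add_eq_zero_left h
    rw [← lie_skew (B i s) (B s N), h', neg_neg]
    exact (lie_skew (B s N) (B i N)).symm
  ext X
  simp only [Set.mem_setOf_eq]
  constructor
  · rintro ⟨⟨a, hX⟩, hbrkt⟩
    have main : ∀ s : Fin (n + 2), s < N →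
        (∑ p : {q : Fin (n + 2) × Fin (n + 2) // q.1 < q.2 ∧ q.2 < N},
          (if p.1.2 = s then a p.1.1 N - a p.1.1 s
            else if p.1.1 = s then -(a p.1.2 N) else 0)
            • ⁅B p.1.1 N, B p.1.2 N⁆) = ⁅X, B s N⁆ := by
      intro s hs
      have hsN : s ≠ N := ne_of_lt hs
      set M : L := (∑ i, if i < s then (a i N - a i s) • ⁅B i N, B s N⁆ else 0)
        + (∑ j, if s < j ∧ j < N then (-(a j N)) • ⁅B s N, B j N⁆ else 0) with hM
      have lhsM :
          (∑ p : {q : Fin (n + 2) × Fin (n + 2) // q.1 < q.2 ∧ q.2 < N},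
            (if p.1.2 = s then a p.1.1 N - a p.1.1 s
              else if p.1.1 = s then -(a p.1.2 N) else 0)
              • ⁅B p.1.1 N, B p.1.2 N⁆) = M := by
        rw [← Finset.sum_subtype
          (univ.filter (fun q : Fin (n + 2) × Fin (n + 2) => q.1 < q.2 ∧ q.2 < N))
          (by simp) (fun q => (if q.2 = s then a q.1 N - a q.1 s
              else if q.1 = s then -(a q.2 N) else 0) • ⁅B q.1 N, B q.2 N⁆)]
        rw [Finset.sum_filter, ← Finset.univ_product_univ, Finset.sum_product]
        have step : ∀ i j : Fin (n + 2),
            (if i < j ∧ j < N then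
              (if j = s then a i N - a i s
                else if i = s then -(a j N) else 0) • ⁅B i N, B j N⁆ else 0)
            = (if i < s then (if j = s then (a i N - a i s) • ⁅B i N, B s N⁆ else 0) else 0)
              + (if i = s then (if s < j ∧ j < N then (-(a j N)) • ⁅B s N, B j N⁆ else 0) else 0) := by
          intro i j
          by_cases hjs : j = s
          · subst hjs
            by_cases hi : i < j
            · rw [if_pos ⟨hi, hs⟩, if_pos hi, if_pos rfl, if_neg (ne_of_lt hi),
                add_zero, if_pos rfl]
            · rw [if_neg (show ¬(i < j ∧ j < N) from fun hc => hi hc.1), if_neg hi, zero_add]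
              by_cases his : i = j
              · subst his
                simp
              · rw [if_neg his]
          · by_cases his : i = s
            · subst his
              by_cases hc : i < j ∧ j < N <;> simp [hjs, hc, lt_irrefl]
            · have hL : (if i < j ∧ j < N then
                  (if j = s then a i N - a i s
                    else if i = s then -(a j N) else 0) • ⁅B i N, B j N⁆ else 0) = 0 := by
                by_cases hc : i < j ∧ j < N
                · rw [if_pos hc, if_neg hjs, if_neg his, zero_smul]
                · rw [if_neg hc]
              rw [hL]
              have hz : (if i < s then (if j = s then
                  (a i N - a i s) • ⁅B i N, B s N⁆ else 0) else 0) = 0 := by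
                by_cases hi : i < s
                · rw [if_pos hi, if_neg hjs]
                · rw [if_neg hi]
              rw [hz, if_neg his, add_zero]
        calc (∑ i, ∑ j, if i < j ∧ j < N then
              (if j = s then a i N - a i s
                else if i = s then -(a j N) else 0) • ⁅B i N, B j N⁆ else 0)
            = ∑ i, ∑ j,
              ((if i < s then (if j = s then (a i N - a i s) • ⁅B i N, B s N⁆ else 0) else 0)
              + (if i = s then (if s < j ∧ j < N then (-(a j N)) • ⁅B s N, B j N⁆ else 0) else 0)) :=
              Finset.sum_congr rfl fun i _ => Finset.sum_congr rfl fun j _ => step i j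
          _ = M := by
              rw [hM]
              simp only [Finset.sum_add_distrib]
              congr 1
              · refine Finset.sum_congr rfl fun i _ => ?_
                by_cases his : i < s
                · simp only [if_pos his]
                  rw [Finset.sum_ite_eq' univ s (fun _ => (a i N - a i s) • ⁅B i N, B s N⁆)]
                  simp
                · simp only [if_neg his, Finset.sum_const_zero]
              · rw [Finset.sum_comm]
                refine Finset.sum_congr rfl fun j _ => ?_
                rw [Finset.sum_ite_eq' univ s
                  (fun _ => if s < j ∧ j < N then (-(a j N)) • ⁅B s N, B j N⁆ else 0)]
                simp
      have rhsM : ⁅X, B s N⁆ = M := by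
        rw [hX, sum_lie']
        have expand : ∀ i : Fin (n + 2),
            ⁅∑ j ∈ univ.filter (fun j => i < j), a i j • B i j, B s N⁆
            = ∑ j ∈ univ.filter (fun j => i < j), a i j • ⁅B i j, B s N⁆ := by
          intro i
          rw [sum_lie']
          exact Finset.sum_congr rfl fun j _ => zsmulLieAux _ _ _
        rw [Finset.sum_congr rfl fun i _ => expand i]
        have step1 : ∀ i : Fin (n + 2), ∀ j ∈ univ.filter (fun j => i < j),
            a i j • ⁅B i j, B s N⁆
            = (if j = s then (-(a i s)) • ⁅B i N, B s N⁆ else 0)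
              + (if j = N then (if i = s then 0 else (a i N) • ⁅B i N, B s N⁆) else 0) := by
          intro i j hj
          rw [Finset.mem_filter] at hj
          have hij : i < j := hj.2
          by_cases hjs : j = s
          · subst hjs
            rw [if_pos rfl, if_neg hsN, add_zero, hb2 j i hs hij, smul_neg]
            exact (neg_smul _ _).symm
          · by_cases hjN : j = N
            · subst hjN
              rw [if_neg hjs, zero_add, if_pos rfl]
              by_cases his : i = s
              · subst his
                rw [if_pos rfl, lie_self, smul_zero]
              · rw [if_neg his]
            · rw [if_neg hjs, if_neg hjN, add_zero, hb1 s i j hs hij hjs hjN, smul_zero]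
        calc (∑ i, ∑ j ∈ univ.filter (fun j => i < j), a i j • ⁅B i j, B s N⁆)
            = ∑ i, ∑ j ∈ univ.filter (fun j => i < j),
              ((if j = s then (-(a i s)) • ⁅B i N, B s N⁆ else 0)
              + (if j = N then (if i = s then 0 else (a i N) • ⁅B i N, B s N⁆) else 0)) :=
              Finset.sum_congr rfl fun i _ => Finset.sum_congr rfl (step1 i)
          _ = ∑ i, ((if i < s then (-(a i s)) • ⁅B i N, B s N⁆ else 0)
              + (if i < N then (if i = s then 0 else (a i N) • ⁅B i N, B s N⁆) else 0)) := by
              refine Finset.sum_congr rfl fun i _ => ?_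
              rw [Finset.sum_add_distrib,
                Finset.sum_ite_eq' (univ.filter (fun j => i < j)) s
                  (fun _ => (-(a i s)) • ⁅B i N, B s N⁆),
                Finset.sum_ite_eq' (univ.filter (fun j => i < j)) N
                  (fun _ => if i = s then 0 else (a i N) • ⁅B i N, B s N⁆)]
              simp only [Finset.mem_filter, Finset.mem_univ, true_and]
          _ = ∑ i, ((if i < s then (a i N - a i s) • ⁅B i N, B s N⁆ else 0)
              + (if s < i ∧ i < N then (-(a i N)) • ⁅B s N, B i N⁆ else 0)) := by
              refine Finset.sum_congr rfl fun i _ => ?_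
              have hw : ⁅B s N, B i N⁆ = -⁅B i N, B s N⁆ := (lie_skew (B s N) (B i N)).symm
              rcases lt_trichotomy i s with h | h | h
              · have hiN : i < N := h.trans hs
                rw [if_pos h, if_pos hiN, if_neg (ne_of_lt h),
                  if_neg (show ¬(s < i ∧ i < N) from fun hc => not_lt_of_gt h hc.1),
                  if_pos h, add_zero, sub_smul, neg_smul]
                abel
              · subst h
                rw [if_neg (lt_irrefl i), if_pos hs, if_pos rfl,
                  if_neg (lt_irrefl i),
                  if_neg (show ¬(i < i ∧ i < N) from fun hc => lt_irrefl i hc.1)]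
              · rw [if_neg (not_lt_of_gt h), if_neg (not_lt_of_gt h),
                  if_neg (ne_of_gt h), zero_add, zero_add]
                by_cases hiN : i < N
                · rw [if_pos hiN, if_pos ⟨h, hiN⟩, hw, smul_neg, neg_smul, neg_neg]
                · rw [if_neg hiN, if_neg (show ¬(s < i ∧ i < N) from fun hc => hiN hc.2)]
          _ = M := by
              rw [hM, Finset.sum_add_distrib]
      exact lhsM.trans rhsM.symm
    have key : ∀ s : Fin (n + 2), s < N →
        ∀ p : {q : Fin (n + 2) × Fin (n + 2) // q.1 < q.2 ∧ q.2 < N},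
          (if p.1.2 = s then a p.1.1 N - a p.1.1 s
            else if p.1.1 = s then -(a p.1.2 N) else 0) = 0 := by
      intro s hs
      exact Fintype.linearIndependent_iff.mp hbr _ ((main s hs).trans (hbrkt s hs))
    have E1 : ∀ i s : Fin (n + 2), i < s → s < N → a i N = a i s := by
      intro i s his hsN
      have h := key s hsN ⟨(i, s), his, hsN⟩
      simp only [if_pos rfl] at h
      exact sub_eq_zero.mp h
    have E2 : ∀ j : Fin (n + 2), 0 < j → j < N → a j N = 0 := by
      intro j h0j hjN
      have h := key 0 h0N ⟨(0, j), h0j, hjN⟩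
      rw [if_neg (ne_of_gt h0j)] at h
      simpa using h
    refine ⟨a 0 N, ?_⟩
    rw [hX, Finset.smul_sum]
    rw [Fintype.sum_eq_single (0 : Fin (n + 2)) ?_]
    · refine Finset.sum_congr rfl fun j hj => ?_
      rw [Finset.mem_filter] at hj
      have h0j : (0 : Fin (n + 2)) < j := hj.2
      by_cases hjN : j = N
      · subst hjN; rfl
      · rw [← E1 0 j h0j (lt_of_le_of_ne (Fin.le_last j) hjN)]
    · intro i hi
      refine Finset.sum_eq_zero fun j hj => ?_
      rw [Finset.mem_filter] at hj
      have hij : i < j := hj.2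
      have hi0 : 0 < i := Fin.pos_of_ne_zero hi
      have haij : a i j = 0 := by
        by_cases hjN : j = N
        · subst hjN; exact E2 i hi0 hij
        · have hjN' : j < N := lt_of_le_of_ne (Fin.le_last j) hjN
          rw [← E1 i j hij hjN']
          exact E2 i hi0 (hij.trans hjN')
      rw [haij, zero_smul]
  · rintro ⟨c, hX⟩
    constructor
    · refine ⟨fun i _ => if i = 0 then c else 0, ?_⟩
      rw [hX, Finset.smul_sum]
      rw [Fintype.sum_eq_single (0 : Fin (n + 2)) ?_]
      · exact Finset.sum_congr rfl fun j _ => by simp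
      · intro i hi
        exact Finset.sum_eq_zero fun j _ => by simp [hi]
    · intro s hs
      have hS : ⁅(∑ j ∈ univ.filter (fun j : Fin (n + 2) => 0 < j), B 0 j), B s N⁆ = 0 := by
        rw [sum_lie']
        by_cases hs0 : s = 0
        · subst hs0
          refine Finset.sum_eq_zero fun j hj => ?_
          rw [Finset.mem_filter] at hj
          by_cases hjN : j = N
          · subst hjN; exact lie_self _
          · exact h2 0 j N hj.2 h0N hjN
        · have h0s : (0 : Fin (n + 2)) < s := Fin.pos_of_ne_zero hs0
          have step : ∀ j ∈ univ.filter (fun j : Fin (n + 2) => 0 < j),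
              ⁅B 0 j, B s N⁆ = (if j = s then ⁅B 0 s, B s N⁆ else 0)
                + (if j = N then ⁅B 0 N, B s N⁆ else 0) := by
            intro j hj
            rw [Finset.mem_filter] at hj
            by_cases hjs : j = s
            · subst hjs
              rw [if_pos rfl, if_neg (ne_of_lt hs), add_zero]
            · by_cases hjN : j = N
              · subst hjN
                rw [if_neg hjs, if_pos rfl, zero_add]
              · rw [h1 0 j s N hj.2 hs (ne_of_lt h0s) (ne_of_lt h0N) hjs hjN,
                  if_neg hjs, if_neg hjN, add_zero]
          rw [Finset.sum_congr rfl step, Finset.sum_add_distrib,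
            Finset.sum_ite_eq' (univ.filter (fun j : Fin (n + 2) => 0 < j)) s
              (fun _ => ⁅B 0 s, B s N⁆),
            Finset.sum_ite_eq' (univ.filter (fun j : Fin (n + 2) => 0 < j)) N
              (fun _ => ⁅B 0 N, B s N⁆)]
          simp only [Finset.mem_filter, Finset.mem_univ, true_and, h0s, h0N, if_pos]
          rw [← add_lie, ← lie_skew (B 0 s + B 0 N) (B s N), h3 0 s N h0s hs, neg_zero]
      rw [hX, zsmulLieAux, hS, smul_zero]
end

section
/- Let L be the Lie algebra gr_*(PΣ_n^+) presented by generators B_{i,j}, 1 ≤ i < j ≤ n, and relations [B_{i,j}, B_{k,l}] = 0 (i,j,k,l distinct), [B_{i,j}, B_{i,k}] = 0 (i,j,k distinct), [B_{j,k}, B_{i,j} + B_{i,k}] = 0 (i,j,k distinct). Then the element B_n = Σ_{j=2}^n B_{1,j} commutes with every generator B_{s,n}, 1 ≤ s < n; i.e., B_n centralizes the subalgebra generated by {B_{1,n},...,B_{n-1,n}}. -/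
/-!
Split `Bₙ = Σ_{j ≥ 2} B 1 j` against `B s n`. For `s = 1` every summand commutes with `B 1 n` by the
second relation. For `s > 1` the summands other than `B 1 s` and `B 1 n` commute with `B s n` by the
first relation, and the remaining pair `B 1 s + B 1 n` commutes with `B s n` by the third.
-/

open Finset

theorem sum_lie_eq_zero_of_pair {L ι : Type*} [LieRing L] [DecidableEq ι] {s : Finset ι}
    {a b : ι} (ha : a ∈ s) (hb : b ∈ s) (hab : a ≠ b) (f : ι → L) (y : L)
    (hpair : ⁅f a + f b, y⁆ = 0) (hrest : ∀ j ∈ s, j ≠ a → j ≠ b → ⁅f j, y⁆ = 0) :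
    ⁅∑ j ∈ s, f j, y⁆ = 0 := by
  rw [sum_lie, sum_eq_add_of_mem a b ha hb hab fun j hj hne => hrest j hj hne.1 hne.2, ← add_lie,
    hpair]

theorem lie_eq_zero_comm {L : Type*} [LieRing L] {x y : L} : ⁅x, y⁆ = 0 ↔ ⁅y, x⁆ = 0 := by
  rw [← lie_skew, neg_eq_zero]

theorem mccool_Bn_centralizes_last_column_general (n : ℕ)
    (L : Type*) [LieRing L]
    (B : Fin (n + 2) → Fin (n + 2) → L)
    (h1 : ∀ i j k l : Fin (n + 2), i < j → k < l →
      i ≠ k → i ≠ l → j ≠ k → j ≠ l → ⁅B i j, B k l⁆ = 0)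
    (h2 : ∀ i j k : Fin (n + 2), i < j → i < k → j ≠ k → ⁅B i j, B i k⁆ = 0)
    (h3 : ∀ i j k : Fin (n + 2), i < j → j < k → ⁅B j k, B i j + B i k⁆ = 0) :
    ∀ s : Fin (n + 2), s < Fin.last (n + 1) →
      ⁅∑ j ∈ univ.filter (fun j : Fin (n + 2) => 0 < j), B 0 j,
        B s (Fin.last (n + 1))⁆ = 0 := by
  intro s hs
  have hlast : (0 : Fin (n + 2)) < Fin.last (n + 1) := Fin.last_pos
  rcases (Fin.zero_le s).eq_or_lt with rfl | hs0
  · rw [sum_lie]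
    refine sum_eq_zero fun j hj => ?_
    obtain rfl | hj_ne := eq_or_ne j (Fin.last (n + 1))
    · exact lie_self _
    · exact h2 0 j _ (mem_filter.mp hj).2 hlast hj_ne
  · refine sum_lie_eq_zero_of_pair (by simpa using hs0) (by simpa using hlast) hs.ne _ _
      (lie_eq_zero_comm.mp (h3 0 s _ hs0 hs)) fun j hj hjs hjl => ?_
    exact h1 0 j s _ (mem_filter.mp hj).2 hs hs0.ne hlast.ne hjs hjl

/-- In the Lie algebra `gr₊(PΣₙ⁺)` of the upper triangular McCool group, presented
by generators `B i j` (`i < j`) and the relations below, the element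
`Bₙ = Σ_{j=2}^{n} B 1 j` commutes with every generator `B s n` of the last column,
hence centralizes the free subalgebra they generate.  (Indices run over
`Fin (n+2)`, so there are at least two generators and the last column is
`Fin.last (n+1)`.) -/
theorem mccool_Bn_centralizes_last_column (n : ℕ)
    (L : Type*) [LieRing L] [LieAlgebra ℤ L]
    (B : Fin (n + 2) → Fin (n + 2) → L)
    (h1 : ∀ i j k l : Fin (n + 2), i < j → k < l →
      i ≠ k → i ≠ l → j ≠ k → j ≠ l → ⁅B i j, B k l⁆ = 0)
    (h2 : ∀ i j k : Fin (n + 2), i < j → i < k → j ≠ k → ⁅B i j, B i k⁆ = 0)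
    (h3 : ∀ i j k : Fin (n + 2), i < j → j < k → ⁅B j k, B i j + B i k⁆ = 0) :
    ∀ s : Fin (n + 2), s < Fin.last (n + 1) →
      ⁅∑ j ∈ univ.filter (fun j : Fin (n + 2) => 0 < j), B 0 j,
        B s (Fin.last (n + 1))⁆ = 0 :=
  mccool_Bn_centralizes_last_column_general n L B h1 h2 h3
end

section
/- The upper triangular McCool group PΣ_n^+ is an iterated semidirect product of free groups: there is a split short exact sequence 1 → F_{n-1} → PΣ_n^+ → PΣ_{n-1}^+ → 1, where F_{n-1} is the free subgroup generated by {β_{i,n} : 1 ≤ i ≤ n-1}, and the projection PΣ_n^+ → PΣ_{n-1}^+ sends β_{i,j} with j ≤ n-1 to β_{i,j} and β_{i,n} to 1. -/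
open FreeGroup

namespace McCoolAux
variable {n : ℕ}

def tau (n : ℕ) : FreeGroup (Fin (n+1)) →* FreeGroup (Fin n) :=
  FreeGroup.lift (Fin.lastCases 1 (fun k => FreeGroup.of k))
def incl (n : ℕ) : FreeGroup (Fin n) →* FreeGroup (Fin (n+1)) :=
  FreeGroup.lift (fun k => FreeGroup.of k.castSucc)
@[simp] lemma incl_of (k : Fin n) : incl n (.of k) = .of k.castSucc := FreeGroup.lift_apply_of
@[simp] lemma tau_of_last : tau n (.of (Fin.last n)) = 1 := by simp [tau, FreeGroup.lift_apply_of]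
@[simp] lemma tau_of_castSucc (k : Fin n) : tau n (.of k.castSucc) = .of k := by
  simp [tau, FreeGroup.lift_apply_of]
@[simp] lemma tau_incl (g : FreeGroup (Fin n)) : tau n (incl n g) = g := by
  have : (tau n).comp (incl n) = MonoidHom.id _ := by
    apply FreeGroup.ext_hom; intro a; simp
  exact DFunLike.congr_fun this g
lemma autExt {α : Type*} {φ ψ : MulAut (FreeGroup α)}
    (h : ∀ a, φ (FreeGroup.of a) = ψ (FreeGroup.of a)) : φ = ψ := by
  ext x
  exact DFunLike.congr_fun
    (FreeGroup.ext_hom (φ : FreeGroup α →* FreeGroup α) (ψ : FreeGroup α →* FreeGroup α) h) x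

/-- Extension of an endomorphism-datum of `F_n` to `F_{n+1}` fixing the last letter. -/
def E (ψ : MulAut (FreeGroup (Fin n))) : FreeGroup (Fin (n+1)) →* FreeGroup (Fin (n+1)) :=
  FreeGroup.lift (Fin.lastCases (FreeGroup.of (Fin.last n)) (fun k => incl n (ψ (.of k))))

@[simp] lemma E_of_last (ψ : MulAut (FreeGroup (Fin n))) :
    E ψ (.of (Fin.last n)) = .of (Fin.last n) := by simp [E, FreeGroup.lift_apply_of]

@[simp] lemma E_of_castSucc (ψ : MulAut (FreeGroup (Fin n))) (k : Fin n) :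
    E ψ (.of k.castSucc) = incl n (ψ (.of k)) := by simp [E, FreeGroup.lift_apply_of]

lemma E_incl (ψ : MulAut (FreeGroup (Fin n))) (x : FreeGroup (Fin n)) :
    E ψ (incl n x) = incl n (ψ x) := by
  have : (E ψ).comp (incl n) = (incl n).comp (ψ : FreeGroup (Fin n) →* FreeGroup (Fin n)) := by
    apply FreeGroup.ext_hom; intro a; simp
  exact DFunLike.congr_fun this x

lemma E_mul (ψ χ : MulAut (FreeGroup (Fin n))) (x) : E (ψ * χ) x = E ψ (E χ x) := by
  have : E (ψ * χ) = (E ψ).comp (E χ) := by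
    apply FreeGroup.ext_hom; intro a
    induction a using Fin.lastCases with
    | last => simp
    | cast k => simp [E_incl]
  exact DFunLike.congr_fun this x

lemma E_one (x) : E (1 : MulAut (FreeGroup (Fin n))) x = x := by
  have : E (1 : MulAut (FreeGroup (Fin n))) = MonoidHom.id _ := by
    apply FreeGroup.ext_hom; intro a
    induction a using Fin.lastCases with
    | last => simp
    | cast k => simp
  exact DFunLike.congr_fun this x

/-- The extension homomorphism `Aut F_n → Aut F_{n+1}`. -/
def iota (n : ℕ) : MulAut (FreeGroup (Fin n)) →* MulAut (FreeGroup (Fin (n+1))) :=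
  MonoidHom.mk' (fun ψ =>
    { toFun := E ψ
      invFun := E ψ⁻¹
      left_inv := fun x => by rw [← E_mul, inv_mul_cancel, E_one]
      right_inv := fun x => by rw [← E_mul, mul_inv_cancel, E_one]
      map_mul' := (E ψ).map_mul })
    (fun ψ χ => by ext x; exact E_mul ψ χ x)

@[simp] lemma iota_apply (ψ : MulAut (FreeGroup (Fin n))) (x) : iota n ψ x = E ψ x := rfl


/-- The subgroup of automorphisms descending along `tau`. -/
def T (n : ℕ) : Subgroup (MulAut (FreeGroup (Fin (n+1)))) where
  carrier := {φ | ∃ ψ : MulAut (FreeGroup (Fin n)), ∀ x, tau n (φ x) = ψ (tau n x)}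
  one_mem' := ⟨1, fun x => rfl⟩
  mul_mem' := by
    rintro a b ⟨ψa, ha⟩ ⟨ψb, hb⟩
    exact ⟨ψa * ψb, fun x => by simp only [MulAut.mul_apply, ha, hb]⟩
  inv_mem' := by
    rintro a ⟨ψ, ha⟩
    refine ⟨ψ⁻¹, fun x => ?_⟩
    have := ha (a⁻¹ x)
    simp only [MulAut.apply_inv_self] at this
    rw [this]
    simp


lemma mem_T_iff {φ : MulAut (FreeGroup (Fin (n+1)))} :
    φ ∈ T n ↔ ∃ ψ : MulAut (FreeGroup (Fin n)), ∀ x, tau n (φ x) = ψ (tau n x) := Iff.rfl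

lemma descend_unique {φ : MulAut (FreeGroup (Fin (n+1)))} {ψ ψ' : MulAut (FreeGroup (Fin n))}
    (h : ∀ x, tau n (φ x) = ψ (tau n x)) (h' : ∀ x, tau n (φ x) = ψ' (tau n x)) : ψ = ψ' := by
  ext g
  have := (h (incl n g)).symm.trans (h' (incl n g))
  simpa using this

/-- The descent homomorphism. -/
noncomputable def dp (n : ℕ) : T n →* MulAut (FreeGroup (Fin n)) :=
  MonoidHom.mk' (fun φ => Classical.choose (mem_T_iff.mp φ.2))
    (by
      intro a b
      have ha := Classical.choose_spec (mem_T_iff.mp a.2)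
      have hb := Classical.choose_spec (mem_T_iff.mp b.2)
      have hab := Classical.choose_spec (mem_T_iff.mp (a * b).2)
      refine descend_unique hab (fun x => ?_)
      have : ((a * b : T n) : MulAut (FreeGroup (Fin (n+1)))) x = a.1 (b.1 x) := rfl
      rw [this, ha, hb, MulAut.mul_apply])

lemma dp_spec (φ : T n) (x) : tau n (φ.1 x) = dp n φ (tau n x) :=
  Classical.choose_spec (mem_T_iff.mp φ.2) x

lemma dp_eq (φ : T n) (ψ : MulAut (FreeGroup (Fin n)))
    (h : ∀ x, tau n (φ.1 x) = ψ (tau n x)) : dp n φ = ψ :=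
  descend_unique (dp_spec φ) h


section WithBeta

variable (β : Fin (n+1) → Fin (n+1) → MulAut (FreeGroup (Fin (n+1))))
variable (hβ : ∀ i j : Fin (n + 1), i ≠ j →
      (β i j (FreeGroup.of j) = (FreeGroup.of i)⁻¹ * FreeGroup.of j * FreeGroup.of i) ∧
      (∀ k : Fin (n + 1), k ≠ j → β i j (FreeGroup.of k) = FreeGroup.of k))

@[simp] lemma pure_eq {α : Type*} (x : α) : (pure x : FreeGroup α) = FreeGroup.of x := rfl

/-- The homomorphism `F_n → Aut F_{n+1}` sending `i` to `β i (last)`. -/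
def fhom : FreeGroup (Fin n) →* MulAut (FreeGroup (Fin (n+1))) :=
  FreeGroup.lift (fun i => β i.castSucc (Fin.last n))

@[simp] lemma fhom_of (i : Fin n) : fhom β (.of i) = β i.castSucc (Fin.last n) :=
  FreeGroup.lift_apply_of

include hβ

lemma fhom_fix_of (u : FreeGroup (Fin n)) (k : Fin n) :
    fhom β u (.of k.castSucc) = .of k.castSucc := by
  induction u using FreeGroup.induction_on with
  | C1 => simp
  | of x =>
      rw [fhom_of]
      exact (hβ _ _ (Fin.castSucc_lt_last x).ne).2 _ (Fin.castSucc_lt_last k).ne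
  | inv_of x _ =>
      rw [_root_.map_inv, fhom_of]
      have := (hβ _ _ (Fin.castSucc_lt_last x).ne).2 _ (Fin.castSucc_lt_last k).ne
      exact (MulEquiv.symm_apply_eq _).mpr this.symm
  | mul x y hx hy =>
      rw [_root_.map_mul, MulAut.mul_apply, hy, hx]

lemma fhom_fix (u : FreeGroup (Fin n)) (x : FreeGroup (Fin n)) :
    fhom β u (incl n x) = incl n x := by
  have : (fhom β u : FreeGroup (Fin (n+1)) →* FreeGroup (Fin (n+1))).comp (incl n) = incl n := by
    apply FreeGroup.ext_hom; intro a
    simpa using fhom_fix_of β hβ u a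
  exact DFunLike.congr_fun this x

lemma fhom_last (u : FreeGroup (Fin n)) :
    fhom β u (.of (Fin.last n)) = (incl n u)⁻¹ * .of (Fin.last n) * incl n u := by
  induction u using FreeGroup.induction_on with
  | C1 => simp
  | of x =>
      rw [fhom_of, incl_of]
      exact (hβ _ _ (Fin.castSucc_lt_last x).ne).1
  | inv_of x _ =>
      rw [_root_.map_inv, fhom_of, _root_.map_inv, incl_of]
      have h1 := (hβ _ _ (Fin.castSucc_lt_last x).ne).1
      have h2 := (hβ _ _ (Fin.castSucc_lt_last x).ne).2 _ (Fin.castSucc_lt_last x).ne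
      refine (MulEquiv.symm_apply_eq _).mpr ?_
      simp only [inv_inv, _root_.map_mul, _root_.map_inv, h1, h2]
      group
  | mul x y hx hy =>
      rw [_root_.map_mul, MulAut.mul_apply, hy, _root_.map_mul, _root_.map_mul, _root_.map_inv,
        fhom_fix β hβ x, hx, _root_.map_mul, mul_inv_rev]
      group

/-- An automorphism fixing the first `n` letters and conjugating the last letter by
`incl u` is `fhom β u`. -/
lemma eq_fhom (φ : MulAut (FreeGroup (Fin (n+1)))) (u : FreeGroup (Fin n))
    (h1 : ∀ k : Fin n, φ (.of k.castSucc) = .of k.castSucc)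
    (h2 : φ (.of (Fin.last n)) = (incl n u)⁻¹ * .of (Fin.last n) * incl n u) :
    φ = fhom β u := by
  apply autExt
  intro a
  induction a using Fin.lastCases with
  | last => rw [h2, fhom_last β hβ]
  | cast k => rw [h1, fhom_fix_of β hβ]


end WithBeta

lemma comm_last {u : FreeGroup (Fin n)}
    (h : FreeGroup.of (Fin.last n) * incl n u = incl n u * FreeGroup.of (Fin.last n)) :
    u = 1 := by
  cases n with
  | zero =>
      exact FreeGroup.induction_on u rfl (fun x => x.elim0) (fun x _ => x.elim0)
        (fun x y hx hy => by rw [hx, hy, one_mul])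
  | succ m =>
      have hνt : (FreeGroup.lift (fun _ : Fin (m+1) => Multiplicative.ofAdd (1:ℤ)))
          (FreeGroup.of 0) = Multiplicative.ofAdd (1:ℤ) := FreeGroup.lift_apply_of
      have ht1 : (FreeGroup.of 0 : FreeGroup (Fin (m+1))) ≠ 1 := by
        intro hteq
        have h2 := congrArg (FreeGroup.lift (fun _ : Fin (m+1) => Multiplicative.ofAdd (1:ℤ))) hteq
        rw [hνt, MonoidHom.map_one] at h2
        have h3 := congrArg Multiplicative.toAdd h2
        simp at h3
      have ht2 : (FreeGroup.of 0 : FreeGroup (Fin (m+1))) * FreeGroup.of 0 ≠ 1 := by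
        intro hteq
        have h2 := congrArg (FreeGroup.lift (fun _ : Fin (m+1) => Multiplicative.ofAdd (1:ℤ))) hteq
        rw [_root_.map_mul, hνt, MonoidHom.map_one] at h2
        have h3 := congrArg Multiplicative.toAdd h2
        simp at h3
      set t : FreeGroup (Fin (m+1)) := FreeGroup.of 0 with ht
      let χ : FreeGroup (Fin (m+2)) →* Equiv.Perm (FreeGroup (Fin (m+1))) :=
        FreeGroup.lift (Fin.lastCases (Equiv.swap 1 t)
          (fun k => MulAction.toPermHom (FreeGroup (Fin (m+1))) (FreeGroup (Fin (m+1)))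
            (FreeGroup.of k)))
      have hχlast : χ (FreeGroup.of (Fin.last (m+1))) = Equiv.swap 1 t := by
        show FreeGroup.lift _ _ = _
        rw [FreeGroup.lift_apply_of, Fin.lastCases_last]
      have hχincl : ∀ g : FreeGroup (Fin (m+1)),
          χ (incl (m+1) g) = MulAction.toPermHom _ _ g := by
        intro g
        have hc : χ.comp (incl (m+1)) = MulAction.toPermHom _ _ := by
          apply FreeGroup.ext_hom; intro a
          show χ (incl (m+1) (FreeGroup.of a)) = _
          rw [incl_of]
          show FreeGroup.lift _ _ = _
          rw [FreeGroup.lift_apply_of, Fin.lastCases_castSucc]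
        exact DFunLike.congr_fun hc g
      have hp := congrArg χ h
      rw [_root_.map_mul, _root_.map_mul, hχlast, hχincl] at hp
      have he := DFunLike.congr_fun hp (1 : FreeGroup (Fin (m+1)))
      rw [Equiv.Perm.mul_apply, Equiv.Perm.mul_apply, Equiv.swap_apply_left] at he
      have hu1 : (MulAction.toPermHom (FreeGroup (Fin (m+1))) (FreeGroup (Fin (m+1))) u) 1
          = u * 1 := rfl
      have hut : (MulAction.toPermHom (FreeGroup (Fin (m+1))) (FreeGroup (Fin (m+1))) u) t
          = u * t := rfl
      rw [hu1, hut, mul_one] at he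
      by_cases h1 : u = 1
      · exact h1
      by_cases h2 : u = t
      · rw [h2, Equiv.swap_apply_right] at he
        exact absurd he.symm ht2
      · rw [Equiv.swap_apply_of_ne_of_ne h1 h2] at he
        exact absurd (left_eq_mul.mp he) ht1

lemma fhom_injective (β : Fin (n+1) → Fin (n+1) → MulAut (FreeGroup (Fin (n+1))))
    (hβ : ∀ i j : Fin (n + 1), i ≠ j →
      (β i j (FreeGroup.of j) = (FreeGroup.of i)⁻¹ * FreeGroup.of j * FreeGroup.of i) ∧
      (∀ k : Fin (n + 1), k ≠ j → β i j (FreeGroup.of k) = FreeGroup.of k)) :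
    Function.Injective (fhom β) := by
  rw [injective_iff_map_eq_one]
  intro u hu
  have hc : (incl n u)⁻¹ * FreeGroup.of (Fin.last n) * incl n u = FreeGroup.of (Fin.last n) := by
    rw [← fhom_last β hβ u, hu]
    rfl
  have hcomm : FreeGroup.of (Fin.last n) * incl n u = incl n u * FreeGroup.of (Fin.last n) := by
    have := congrArg (fun z => incl n u * z) hc
    simpa [mul_assoc] using this
  exact comm_last hcomm
end McCoolAux

namespace McCoolAux
variable {n : ℕ}

/-- The subgroup of automorphisms preserving the "first n letters" subgroup and
conjugating the last letter into it. -/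
def W (n : ℕ) : Subgroup (MulAut (FreeGroup (Fin (n+1)))) where
  carrier := {φ | (∃ v ∈ (incl n).range,
      φ (FreeGroup.of (Fin.last n)) = v⁻¹ * FreeGroup.of (Fin.last n) * v) ∧
      ∀ x, x ∈ (incl n).range ↔ φ x ∈ (incl n).range}
  one_mem' := ⟨⟨1, one_mem _, by simp⟩, fun x => Iff.rfl⟩
  mul_mem' := by
    rintro a b ⟨⟨va, hva, ha2⟩, ha3⟩ ⟨⟨vb, hvb, hb2⟩, hb3⟩
    constructor
    · refine ⟨va * a vb, mul_mem hva ((ha3 vb).mp hvb), ?_⟩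
      show a (b (FreeGroup.of (Fin.last n))) = _
      rw [hb2, _root_.map_mul, _root_.map_mul, _root_.map_inv, ha2, mul_inv_rev]
      group
    · exact fun x => (hb3 x).trans (ha3 (b x))
  inv_mem' := by
    rintro a ⟨⟨v, hv, h2⟩, h3⟩
    constructor
    · refine ⟨(a⁻¹ v)⁻¹, inv_mem ((h3 (a⁻¹ v)).mpr (by rw [MulAut.apply_inv_self]; exact hv)), ?_⟩
      refine (MulEquiv.symm_apply_eq _).mpr ?_
      rw [inv_inv, _root_.map_mul, _root_.map_mul, _root_.map_inv, MulAut.apply_inv_self, h2]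
      group
    · intro x
      have hx := h3 (a⁻¹ x)
      rw [MulAut.apply_inv_self] at hx
      exact hx.symm

lemma iota_incl (ψ : MulAut (FreeGroup (Fin n))) (x : FreeGroup (Fin n)) :
    iota n ψ (incl n x) = incl n (ψ x) := E_incl ψ x

lemma iota_mem_W (ψ : MulAut (FreeGroup (Fin n))) : iota n ψ ∈ W n := by
  constructor
  · exact ⟨1, one_mem _, by simp⟩
  · intro x
    constructor
    · rintro ⟨y, rfl⟩
      exact ⟨ψ y, (iota_incl ψ y).symm⟩
    · rintro ⟨y, hy⟩
      have hx : x = (iota n ψ)⁻¹ (incl n y) := by rw [hy]; exact (MulAut.inv_apply_self _ _ _).symm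
      rw [hx, ← _root_.map_inv (iota n), iota_incl]
      exact ⟨ψ⁻¹ y, rfl⟩

end McCoolAux

namespace McCoolAux
variable {n : ℕ}
variable (β : Fin (n+1) → Fin (n+1) → MulAut (FreeGroup (Fin (n+1))))
variable (hβ : ∀ i j : Fin (n + 1), i ≠ j →
      (β i j (FreeGroup.of j) = (FreeGroup.of i)⁻¹ * FreeGroup.of j * FreeGroup.of i) ∧
      (∀ k : Fin (n + 1), k ≠ j → β i j (FreeGroup.of k) = FreeGroup.of k))

include hβ

lemma fhom_mem_W (u : FreeGroup (Fin n)) : fhom β u ∈ W n := by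
  constructor
  · exact ⟨incl n u, ⟨u, rfl⟩, fhom_last β hβ u⟩
  · intro x
    constructor
    · rintro ⟨y, rfl⟩
      exact ⟨y, (fhom_fix β hβ u y).symm⟩
    · rintro ⟨y, hy⟩
      have hx : x = (fhom β u)⁻¹ (incl n y) := by
        rw [hy]; exact (MulAut.inv_apply_self _ _ _).symm
      rw [hx, ← _root_.map_inv (fhom β), fhom_fix β hβ]
      exact ⟨y, rfl⟩

lemma W_conj {φ : MulAut (FreeGroup (Fin (n+1)))} (hφ : φ ∈ W n) (u : FreeGroup (Fin n)) :
    φ * fhom β u * φ⁻¹ ∈ (fhom β).range := by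
  obtain ⟨⟨v, hv, h2⟩, h3⟩ := hφ
  obtain ⟨⟨v', hv', h2'⟩, h3'⟩ := (W n).inv_mem (⟨⟨v, hv, h2⟩, h3⟩ : φ ∈ W n)
  have hm : incl n u * v' ∈ (incl n).range := mul_mem ⟨u, rfl⟩ hv'
  have hφm : φ (incl n u * v') ∈ (incl n).range := (h3 _).mp hm
  have hz : v * φ (incl n u * v') ∈ (incl n).range := mul_mem hv hφm
  obtain ⟨u'', hu''⟩ := hz
  refine ⟨u'', ?_⟩
  refine (eq_fhom β hβ _ u'' ?_ ?_).symm
  · intro k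
    have hxm : φ⁻¹ (FreeGroup.of k.castSucc) ∈ (incl n).range := by
      refine (h3 _).mpr ?_
      rw [MulAut.apply_inv_self]
      exact ⟨FreeGroup.of k, incl_of k⟩
    obtain ⟨y, hy⟩ := hxm
    show φ (fhom β u (φ⁻¹ (FreeGroup.of k.castSucc))) = _
    rw [← hy, fhom_fix β hβ, hy, MulAut.apply_inv_self]
  · obtain ⟨a', ha'⟩ := hv'
    show φ (fhom β u (φ⁻¹ (FreeGroup.of (Fin.last n)))) = _
    rw [h2']
    have step1 : fhom β u (v'⁻¹ * FreeGroup.of (Fin.last n) * v')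
        = (incl n u * v')⁻¹ * FreeGroup.of (Fin.last n) * (incl n u * v') := by
      rw [_root_.map_mul, _root_.map_mul, _root_.map_inv, ← ha', fhom_fix β hβ, ha',
        fhom_last β hβ, mul_inv_rev]
      group
    rw [step1, _root_.map_mul, _root_.map_mul, _root_.map_inv, h2, hu'', mul_inv_rev]
    group

end McCoolAux

namespace McCoolAux
variable {n : ℕ}
variable (β : Fin (n+1) → Fin (n+1) → MulAut (FreeGroup (Fin (n+1))))
variable (hβ : ∀ i j : Fin (n + 1), i ≠ j →
      (β i j (FreeGroup.of j) = (FreeGroup.of i)⁻¹ * FreeGroup.of j * FreeGroup.of i) ∧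
      (∀ k : Fin (n + 1), k ≠ j → β i j (FreeGroup.of k) = FreeGroup.of k))
variable (β' : Fin n → Fin n → MulAut (FreeGroup (Fin n)))
variable (hβ' : ∀ i j : Fin n, i ≠ j →
      (β' i j (FreeGroup.of j) = (FreeGroup.of i)⁻¹ * FreeGroup.of j * FreeGroup.of i) ∧
      (∀ k : Fin n, k ≠ j → β' i j (FreeGroup.of k) = FreeGroup.of k))

lemma beta_last_eq_fhom (i : Fin (n+1)) (hi : i < Fin.last n) :
    β i (Fin.last n) = fhom β (FreeGroup.of (i.castPred hi.ne)) := by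
  rw [fhom_of, Fin.castSucc_castPred]

include hβ hβ' in
lemma beta_eq_iota (i j : Fin n) (hij : i ≠ j) :
    β i.castSucc j.castSucc = iota n (β' i j) := by
  have hij' : i.castSucc ≠ j.castSucc := fun h => hij (Fin.castSucc_injective n h)
  apply autExt
  intro a
  induction a using Fin.lastCases with
  | last =>
      rw [(hβ _ _ hij').2 _ (Fin.castSucc_lt_last j).ne', iota_apply, E_of_last]
  | cast k =>
      rw [iota_apply, E_of_castSucc]
      by_cases hk : k = j
      · subst hk
        rw [(hβ _ _ hij').1, (hβ' _ _ hij).1]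
        simp [_root_.map_mul, _root_.map_inv, incl_of]
      · have hk' : k.castSucc ≠ j.castSucc := fun h => hk (Fin.castSucc_injective n h)
        rw [(hβ _ _ hij').2 _ hk', (hβ' _ _ hij).2 _ hk, incl_of]

lemma tau_iota (ψ : MulAut (FreeGroup (Fin n))) (x) :
    tau n (iota n ψ x) = ψ (tau n x) := by
  have hc : (tau n).comp ((iota n ψ : MulAut (FreeGroup (Fin (n+1)))) :
      FreeGroup (Fin (n+1)) →* FreeGroup (Fin (n+1)))
      = ((ψ : FreeGroup (Fin n) →* FreeGroup (Fin n))).comp (tau n) := by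
    apply FreeGroup.ext_hom; intro a
    induction a using Fin.lastCases with
    | last => simp
    | cast k => simp [iota_incl]
  exact DFunLike.congr_fun hc x

lemma iota_mem_T (ψ : MulAut (FreeGroup (Fin n))) : iota n ψ ∈ T n :=
  ⟨ψ, fun x => tau_iota ψ x⟩

lemma dp_iota (ψ : MulAut (FreeGroup (Fin n))) (h : iota n ψ ∈ T n) :
    dp n ⟨iota n ψ, h⟩ = ψ :=
  dp_eq _ _ (fun x => tau_iota ψ x)

include hβ in
lemma tau_beta_last (i : Fin (n+1)) (hi : i ≠ Fin.last n) (x) :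
    tau n (β i (Fin.last n) x) = tau n x := by
  have hc : (tau n).comp ((β i (Fin.last n) : MulAut (FreeGroup (Fin (n+1)))) :
      FreeGroup (Fin (n+1)) →* FreeGroup (Fin (n+1))) = tau n := by
    apply FreeGroup.ext_hom; intro a
    induction a using Fin.lastCases with
    | last =>
        show tau n (β i (Fin.last n) (FreeGroup.of (Fin.last n))) = _
        rw [(hβ _ _ hi).1, _root_.map_mul, _root_.map_mul, _root_.map_inv, tau_of_last]
        group
    | cast k =>
        show tau n (β i (Fin.last n) (FreeGroup.of k.castSucc)) = _
        rw [(hβ _ _ hi).2 _ (Fin.castSucc_lt_last k).ne]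
  exact DFunLike.congr_fun hc x

include hβ in
lemma beta_last_mem_T (i : Fin (n+1)) (hi : i ≠ Fin.last n) : β i (Fin.last n) ∈ T n :=
  ⟨1, fun x => tau_beta_last β hβ i hi x⟩

include hβ in
lemma dp_beta_last (i : Fin (n+1)) (hi : i ≠ Fin.last n) (h : β i (Fin.last n) ∈ T n) :
    dp n ⟨β i (Fin.last n), h⟩ = 1 :=
  dp_eq _ _ (fun x => tau_beta_last β hβ i hi x)

end McCoolAux


open McCoolAux in
/-- The upper triangular McCool group `PΣₙ⁺` (here with `n+1` strands, realized as the
subgroup of `Aut(F_{n+1})` generated by the basis-conjugating automorphisms `β i j`,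
`i < j`) fits into a split short exact sequence
`1 → F_n → PΣ_{n+1}⁺ → PΣ_n⁺ → 1`:
there is a surjective homomorphism `p` sending `β i j` to `β' i j` for `j ≤ n` and
`β i (n+1)` to `1`, admitting a section, whose kernel is the subgroup generated by
`{β i (n+1) : i ≤ n}` and is free of rank `n`. -/
theorem mccool_split_exact_sequence (n : ℕ)
    (β : Fin (n + 1) → Fin (n + 1) → MulAut (FreeGroup (Fin (n + 1))))
    (hβ : ∀ i j : Fin (n + 1), i ≠ j →
      (β i j (FreeGroup.of j) = (FreeGroup.of i)⁻¹ * FreeGroup.of j * FreeGroup.of i) ∧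
      (∀ k : Fin (n + 1), k ≠ j → β i j (FreeGroup.of k) = FreeGroup.of k))
    (β' : Fin n → Fin n → MulAut (FreeGroup (Fin n)))
    (hβ' : ∀ i j : Fin n, i ≠ j →
      (β' i j (FreeGroup.of j) = (FreeGroup.of i)⁻¹ * FreeGroup.of j * FreeGroup.of i) ∧
      (∀ k : Fin n, k ≠ j → β' i j (FreeGroup.of k) = FreeGroup.of k))
    (P : Subgroup (MulAut (FreeGroup (Fin (n + 1)))))
    (hP : P = Subgroup.closure {g | ∃ i j : Fin (n + 1), i < j ∧ g = β i j})
    (P' : Subgroup (MulAut (FreeGroup (Fin n))))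
    (hP' : P' = Subgroup.closure {g | ∃ i j : Fin n, i < j ∧ g = β' i j}) :
    ∃ p : P →* P',
      -- `p` sends `β i j` with `j ≤ n` to `β' i j` ...
      (∀ i j : Fin n, i < j → ∀ hm : β i.castSucc j.castSucc ∈ P,
        ((p ⟨β i.castSucc j.castSucc, hm⟩ : P') : MulAut (FreeGroup (Fin n))) = β' i j) ∧
      -- ... and kills the generators of the last column
      (∀ i : Fin (n + 1), i < Fin.last n → ∀ hm : β i (Fin.last n) ∈ P,
        p ⟨β i (Fin.last n), hm⟩ = 1) ∧
      Function.Surjective p ∧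
      -- the sequence splits
      (∃ s : P' →* P, p.comp s = MonoidHom.id P') ∧
      -- the kernel is the subgroup generated by the last column ...
      Subgroup.map P.subtype p.ker =
        Subgroup.closure {g | ∃ i : Fin (n + 1), i < Fin.last n ∧ g = β i (Fin.last n)} ∧
      -- ... and is a free group of rank `n`
      Nonempty (p.ker ≃* FreeGroup (Fin n)) := by
  subst hP hP'
  set S : Set (MulAut (FreeGroup (Fin (n+1)))) :=
    {g | ∃ i j : Fin (n + 1), i < j ∧ g = β i j} with hS
  set S' : Set (MulAut (FreeGroup (Fin n))) :=
    {g | ∃ i j : Fin n, i < j ∧ g = β' i j} with hS'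
  -- generators of `P` are in `T n`
  have hgenT : ∀ g ∈ S, g ∈ T n := by
    rintro g ⟨i, j, hij, rfl⟩
    by_cases hj : j = Fin.last n
    · subst hj
      exact beta_last_mem_T β hβ i hij.ne
    · have hil : i ≠ Fin.last n := (hij.trans_le (Fin.le_last j)).ne
      have he : β i j = iota n (β' (i.castPred hil) (j.castPred hj)) := by
        have hne : i.castPred hil ≠ j.castPred hj := by
          intro h
          apply hij.ne
          have := congrArg Fin.castSucc h
          rwa [Fin.castSucc_castPred, Fin.castSucc_castPred] at this
        have := beta_eq_iota β hβ β' hβ' (i.castPred hil) (j.castPred hj) hne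
        rwa [Fin.castSucc_castPred, Fin.castSucc_castPred] at this
      rw [he]
      exact iota_mem_T _
  have hST : Subgroup.closure S ≤ T n := (Subgroup.closure_le _).mpr hgenT
  -- generators of `P` are in `W n`
  have hgenW : ∀ g ∈ S, g ∈ W n := by
    rintro g ⟨i, j, hij, rfl⟩
    by_cases hj : j = Fin.last n
    · subst hj
      have hlt : i < Fin.last n := hij
      rw [beta_last_eq_fhom β i hlt]
      exact fhom_mem_W β hβ _
    · have hil : i ≠ Fin.last n := (hij.trans_le (Fin.le_last j)).ne
      have hne : i.castPred hil ≠ j.castPred hj := by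
        intro h
        apply hij.ne
        have := congrArg Fin.castSucc h
        rwa [Fin.castSucc_castPred, Fin.castSucc_castPred] at this
      have he := beta_eq_iota β hβ β' hβ' (i.castPred hil) (j.castPred hj) hne
      rw [Fin.castSucc_castPred, Fin.castSucc_castPred] at he
      rw [he]
      exact iota_mem_W _
  have hSW : Subgroup.closure S ≤ W n := (Subgroup.closure_le _).mpr hgenW
  -- the descended automorphism lies in `P'`
  have hdp_mem : ∀ g (hg : g ∈ Subgroup.closure S) (hT : g ∈ T n),
      dp n ⟨g, hT⟩ ∈ Subgroup.closure S' := by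
    intro g hg
    induction hg using Subgroup.closure_induction with
    | mem g hgS =>
        intro hT
        obtain ⟨i, j, hij, rfl⟩ := hgS
        by_cases hj : j = Fin.last n
        · subst hj
          rw [dp_beta_last β hβ i hij.ne]
          exact one_mem _
        · have hil : i ≠ Fin.last n := (hij.trans_le (Fin.le_last j)).ne
          have hne : i.castPred hil ≠ j.castPred hj := by
            intro h
            apply hij.ne
            have := congrArg Fin.castSucc h
            rwa [Fin.castSucc_castPred, Fin.castSucc_castPred] at this
          have he := beta_eq_iota β hβ β' hβ' (i.castPred hil) (j.castPred hj) hne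
          rw [Fin.castSucc_castPred, Fin.castSucc_castPred] at he
          rw [show (⟨β i j, hT⟩ : T n) = ⟨iota n (β' (i.castPred hil) (j.castPred hj)),
            iota_mem_T _⟩ from Subtype.ext he, dp_iota]
          refine Subgroup.subset_closure ⟨i.castPred hil, j.castPred hj, ?_, rfl⟩
          rw [← Fin.castSucc_lt_castSucc_iff, Fin.castSucc_castPred, Fin.castSucc_castPred]
          exact hij
    | one =>
        intro hT
        rw [show (⟨1, hT⟩ : T n) = 1 from Subtype.ext rfl, MonoidHom.map_one (dp n)]
        exact one_mem _
    | mul x y hx hy ihx ihy =>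
        intro hT
        rw [show (⟨x * y, hT⟩ : T n) = ⟨x, hST hx⟩ * ⟨y, hST hy⟩ from Subtype.ext rfl, _root_.map_mul]
        exact mul_mem (ihx (hST hx)) (ihy (hST hy))
    | inv x hx ihx =>
        intro hT
        rw [show (⟨x⁻¹, hT⟩ : T n) = (⟨x, hST hx⟩)⁻¹ from Subtype.ext rfl, _root_.map_inv]
        exact inv_mem (ihx (hST hx))
  -- the projection
  set p : ↥(Subgroup.closure S) →* ↥(Subgroup.closure S') :=
    MonoidHom.codRestrict ((dp n).comp (Subgroup.inclusion hST)) _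
      (fun x => hdp_mem x.1 x.2 (hST x.2)) with hpdef
  -- the section
  have hmemS : ∀ ψ (hψ' : ψ ∈ Subgroup.closure S'), iota n ψ ∈ Subgroup.closure S := by
    intro ψ hψ'
    induction hψ' using Subgroup.closure_induction with
    | mem g hgS =>
        obtain ⟨i, j, hij, rfl⟩ := hgS
        exact Subgroup.subset_closure
          ⟨i.castSucc, j.castSucc, Fin.castSucc_lt_castSucc_iff.mpr hij,
            (beta_eq_iota β hβ β' hβ' i j hij.ne).symm⟩
    | one => rw [MonoidHom.map_one (iota n)]; exact one_mem _
    | mul x y hx hy ihx ihy => rw [_root_.map_mul]; exact mul_mem ihx ihy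
    | inv x hx ihx => rw [_root_.map_inv]; exact inv_mem ihx
  set s : ↥(Subgroup.closure S') →* ↥(Subgroup.closure S) :=
    MonoidHom.codRestrict ((iota n).comp (Subgroup.closure S').subtype) _
      (fun ψ => hmemS ψ.1 ψ.2) with hsdef
  have hps : ∀ y, p (s y) = y := by
    intro y
    refine Subtype.ext ?_
    show dp n ⟨iota n y.1, hST (hmemS y.1 y.2)⟩ = y.1
    exact dp_iota _ _
  -- the decomposition of elements of `P`
  have hdecomp : ∀ g (hg : g ∈ Subgroup.closure S) (hT : g ∈ T n),
      g * (iota n (dp n ⟨g, hT⟩))⁻¹ ∈ (fhom β).range := by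
    intro g hg
    induction hg using Subgroup.closure_induction with
    | mem g hgS =>
        intro hT
        obtain ⟨i, j, hij, rfl⟩ := hgS
        by_cases hj : j = Fin.last n
        · subst hj
          rw [dp_beta_last β hβ i hij.ne, MonoidHom.map_one (iota n), inv_one, mul_one]
          exact ⟨FreeGroup.of (i.castPred hij.ne), (beta_last_eq_fhom β i hij).symm⟩
        · have hil : i ≠ Fin.last n := (hij.trans_le (Fin.le_last j)).ne
          have hne : i.castPred hil ≠ j.castPred hj := by
            intro h
            apply hij.ne
            have := congrArg Fin.castSucc h
            rwa [Fin.castSucc_castPred, Fin.castSucc_castPred] at this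
          have he := beta_eq_iota β hβ β' hβ' (i.castPred hil) (j.castPred hj) hne
          rw [Fin.castSucc_castPred, Fin.castSucc_castPred] at he
          rw [show (⟨β i j, hT⟩ : T n) = ⟨iota n (β' (i.castPred hil) (j.castPred hj)),
            iota_mem_T _⟩ from Subtype.ext he, dp_iota, ← he, mul_inv_cancel]
          exact one_mem _
    | one =>
        intro hT
        rw [show (⟨1, hT⟩ : T n) = 1 from Subtype.ext rfl, MonoidHom.map_one (dp n),
          MonoidHom.map_one (iota n), inv_one, mul_one]
        exact one_mem _
    | mul x y hx hy ihx ihy =>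
        intro hT
        rw [show (⟨x * y, hT⟩ : T n) = ⟨x, hST hx⟩ * ⟨y, hST hy⟩ from Subtype.ext rfl,
          _root_.map_mul, _root_.map_mul, mul_inv_rev]
        have kx := ihx (hST hx)
        have ky := ihy (hST hy)
        obtain ⟨w, hw⟩ := ky
        have key : x * (y * (iota n (dp n ⟨y, hST hy⟩))⁻¹) * x⁻¹ ∈ (fhom β).range := by
          rw [← hw]
          exact W_conj β hβ (hSW hx) w
        have hre : x * y * ((iota n (dp n ⟨y, hST hy⟩))⁻¹ * (iota n (dp n ⟨x, hST hx⟩))⁻¹)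
            = (x * (y * (iota n (dp n ⟨y, hST hy⟩))⁻¹) * x⁻¹)
              * (x * (iota n (dp n ⟨x, hST hx⟩))⁻¹) := by
          group
        rw [hre]
        exact mul_mem key kx
    | inv x hx ihx =>
        intro hT
        rw [show (⟨x⁻¹, hT⟩ : T n) = (⟨x, hST hx⟩)⁻¹ from Subtype.ext rfl,
          _root_.map_inv, _root_.map_inv, inv_inv]
        have kx := ihx (hST hx)
        obtain ⟨w, hw⟩ := kx
        have hre : x⁻¹ * iota n (dp n ⟨x, hST hx⟩)
            = (iota n (dp n ⟨x, hST hx⟩))⁻¹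
              * (x * (iota n (dp n ⟨x, hST hx⟩))⁻¹)⁻¹ * iota n (dp n ⟨x, hST hx⟩) := by
          group
        rw [hre, ← hw]
        have h2 := W_conj β hβ (inv_mem (iota_mem_W (dp n ⟨x, hST hx⟩))) w⁻¹
        rw [_root_.map_inv (fhom β), inv_inv] at h2
        exact h2
  -- the kernel
  have hK : Subgroup.closure {g | ∃ i : Fin (n+1), i < Fin.last n ∧ g = β i (Fin.last n)}
      = (fhom β).range := by
    have hsets : {g | ∃ i : Fin (n+1), i < Fin.last n ∧ g = β i (Fin.last n)}
        = Set.range (fun i : Fin n => β i.castSucc (Fin.last n)) := by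
      ext g
      constructor
      · rintro ⟨i, hi, rfl⟩
        refine ⟨i.castPred hi.ne, ?_⟩
        show β (i.castPred hi.ne).castSucc (Fin.last n) = β i (Fin.last n)
        rw [Fin.castSucc_castPred]
      · rintro ⟨i, rfl⟩
        exact ⟨i.castSucc, Fin.castSucc_lt_last i, rfl⟩
    rw [hsets]
    exact (FreeGroup.range_lift_eq_closure).symm
  have hker : Subgroup.map (Subgroup.closure S).subtype p.ker
      = Subgroup.closure {g | ∃ i : Fin (n+1), i < Fin.last n ∧ g = β i (Fin.last n)} := by
    rw [hK]
    apply le_antisymm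
    · rintro g ⟨x, hx, rfl⟩
      have hx1 : dp n ⟨x.1, hST x.2⟩ = 1 := Subtype.ext_iff.mp (MonoidHom.mem_ker.mp hx)
      have hd := hdecomp x.1 x.2 (hST x.2)
      rw [hx1, MonoidHom.map_one (iota n), inv_one, mul_one] at hd
      exact hd
    · rw [← hK]
      refine (Subgroup.closure_le _).mpr ?_
      rintro g ⟨i, hi, rfl⟩
      refine ⟨⟨β i (Fin.last n), Subgroup.subset_closure ⟨i, Fin.last n, hi, rfl⟩⟩, ?_, rfl⟩
      exact MonoidHom.mem_ker.mpr (Subtype.ext (dp_beta_last β hβ i hi.ne _))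
  refine ⟨p, ?_, ?_, ?_, ?_, hker, ?_⟩
  · intro i j hij hm
    show dp n ⟨β i.castSucc j.castSucc, hST hm⟩ = β' i j
    rw [show (⟨β i.castSucc j.castSucc, hST hm⟩ : T n) = ⟨iota n (β' i j), iota_mem_T _⟩ from
      Subtype.ext (beta_eq_iota β hβ β' hβ' i j hij.ne), dp_iota]
  · intro i hi hm
    exact Subtype.ext (dp_beta_last β hβ i hi.ne _)
  · exact fun y => ⟨s y, hps y⟩
  · exact ⟨s, MonoidHom.ext hps⟩
  · refine ⟨?_⟩
    have e1 := Subgroup.equivMapOfInjective p.ker (Subgroup.closure S).subtype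
      (Subgroup.subtype_injective _)
    exact e1.trans ((MulEquiv.subgroupCongr (hker.trans hK)).trans
      (MonoidHom.ofInjective (fhom_injective β hβ)).symm)
end

section
/- In the Lie algebra gr_*(P(r,n)) presented as in Theorem 3.3 of Cohen (with generators Z_k for 1 ≤ k ≤ n and B_{i,j}^{(p)} for 1 ≤ i < j ≤ n, 1 ≤ p ≤ r, and relations: [Z_j + Z_l + Σ_p B_{j,l}^{(p)}, Y] = 0 for Y ∈ {Z_l, B_{j,l}^{(p)}}; [B_{i,j}^{(p)} + B_{i,k}^{(q)} + B_{j,k}^{(m)}, Y] = 0 for Y ∈ {B_{i,k}^{(q)}, B_{j,k}^{(m)}} with q ≡ p+m mod r; [B_{i,j}^{(p)}, B_{k,l}^{(q)}] = 0 for {i,j} ∩ {k,l} = ∅; [Z_k, B_{i,j}^{(p)}] = 0 for k ∉ {i,j}), the element Δ(r,n) = Σ_{k=1}^n Z_k + Σ_{p=1}^r Σ_{1≤i<j≤n} B_{i,j}^{(p)} is central: it commutes with every generator. -/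
/-!
Write `β i j = ∑ p, B i j p`. Bracketing `Δ` with a generator, only the pairs `{i, j}` that meet
the indices of that generator survive; `B (min l k) (max l k)` stands for the paper's symmetric
convention `B_{l,k} = B_{k,l}`. For `Z k` the survivors group into `Z l + β l k` with `l ≠ k`, each
killed by the first relation (for `l > k` after trading its two instances for the missing one
via `⁅u, u⁆ = 0`). For `B s t p` the pair `{s, t}` joins `Z s + Z t` to form the first relation,
and for every other `l` the sum `β l s + β l t` commutes with `B s t p`: this is the second
relation summed over the upper indices, reindexed along `q = p + m`, in each of the three
positions of `l` relative to `s < t`.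
-/

open Finset

namespace Finset

variable {ι M : Type*} [LinearOrder ι] [AddCommMonoid M]

theorem sum_sum_filter_lt_eq_sum_erase_add (S : Finset ι) (f : ι → ι → M) {k : ι}
    (hk : k ∈ S) :
    ∑ i ∈ S, ∑ j ∈ S with i < j, f i j =
      ∑ l ∈ S.erase k, f (min l k) (max l k) +
        ∑ i ∈ S.erase k, ∑ j ∈ S.erase k with i < j, f i j := by
  have hpair : ∀ l ∈ S.erase k, f (min l k) (max l k) =
      (if k < l then f k l else 0) + if l < k then f l k else 0 := by
    intro l hl
    rcases lt_or_gt_of_ne (ne_of_mem_erase hl) with h | h <;> simp [h, h.not_gt, h.le]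
  simp only [sum_filter]
  rw [← add_sum_erase S _ hk, ← add_sum_erase S _ hk, sum_congr rfl hpair, sum_add_distrib]
  simp only [lt_irrefl, if_false, zero_add]
  rw [add_assoc]
  congr 1
  rw [← sum_add_distrib]
  exact sum_congr rfl fun i _ => (add_sum_erase S (fun j => if i < j then f i j else 0) hk).symm

end Finset

section LieRing

variable {L : Type*} [LieRing L]

theorem lie_add_add_left_eq_zero {a b c : L} (hb : ⁅a + b + c, b⁆ = 0)
    (hc : ⁅a + b + c, c⁆ = 0) : ⁅a + b + c, a⁆ = 0 := by
  have h := lie_self (a + b + c)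
  rwa [lie_add, lie_add, hb, hc, add_zero, add_zero] at h

theorem lie_add_eq_zero_of_lie_add_add_self {a b c : L} (h : ⁅a + b + c, c⁆ = 0) :
    ⁅a + b, c⁆ = 0 := by
  rwa [add_lie _ _ c, lie_self, add_zero] at h

theorem lie_sum_add_sum_eq_zero {ι : Type*} [Fintype ι] (e : ι ≃ ι) {f g : ι → L} {y : L}
    (h : ∀ q, ⁅f q + g (e q), y⁆ = 0) : ⁅∑ q, f q + ∑ q, g q, y⁆ = 0 := by
  rw [← e.sum_comp g, ← sum_add_distrib, sum_lie]
  exact sum_eq_zero fun q _ => h q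

theorem lie_sum_sum_filter_lt_eq_zero {ι : Type*} [LinearOrder ι] (S : Finset ι)
    (f : ι → ι → L) {y : L} (h : ∀ i ∈ S, ∀ j ∈ S, i < j → ⁅f i j, y⁆ = 0) :
    ⁅∑ i ∈ S, ∑ j ∈ S with i < j, f i j, y⁆ = 0 := by
  rw [sum_lie]
  refine sum_eq_zero fun i hi => ?_
  rw [sum_lie]
  exact sum_eq_zero fun j hj => h i hi j (mem_filter.1 hj).1 (mem_filter.1 hj).2

end LieRing

namespace CohenPresentation

variable {r n : ℕ} [NeZero r] {L : Type*} [LieRing L] {Z : Fin n → L}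
  {B : Fin n → Fin n → ZMod r → L}

def delta (Z : Fin n → L) (B : Fin n → Fin n → ZMod r → L) : L :=
  (∑ l, Z l) + ∑ i, ∑ j ∈ univ.filter (fun j => i < j), ∑ q : ZMod r, B i j q

theorem lie_Z_add_sum_B_Z_left
    (hrel1a : ∀ j l : Fin n, j < l → ⁅Z j + Z l + ∑ p : ZMod r, B j l p, Z l⁆ = 0)
    (hrel1b : ∀ (j l : Fin n) (p : ZMod r), j < l →
      ⁅Z j + Z l + ∑ q : ZMod r, B j l q, B j l p⁆ = 0)
    {j l : Fin n} (hjl : j < l) : ⁅Z j + Z l + ∑ q : ZMod r, B j l q, Z j⁆ = 0 :=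
  lie_add_add_left_eq_zero (hrel1a j l hjl)
    (by rw [lie_sum]; exact sum_eq_zero fun p _ => hrel1b j l p hjl)

theorem lie_Z_add_sum_B_min_max
    (hrel1a : ∀ j l : Fin n, j < l → ⁅Z j + Z l + ∑ p : ZMod r, B j l p, Z l⁆ = 0)
    (hrel1b : ∀ (j l : Fin n) (p : ZMod r), j < l →
      ⁅Z j + Z l + ∑ q : ZMod r, B j l q, B j l p⁆ = 0)
    {l k : Fin n} (hlk : l ≠ k) :
    ⁅Z l + ∑ q : ZMod r, B (min l k) (max l k) q, Z k⁆ = 0 := by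
  rcases lt_or_gt_of_ne hlk with h | h
  · rw [min_eq_left h.le, max_eq_right h.le]
    have := hrel1a l k h
    rwa [add_lie (Z l + Z k), add_lie (Z l), lie_self, add_zero, ← add_lie] at this
  · rw [min_eq_right h.le, max_eq_left h.le]
    have := lie_Z_add_sum_B_Z_left hrel1a hrel1b h
    rwa [add_lie (Z k + Z l), add_lie (Z k), lie_self, zero_add, ← add_lie] at this

theorem lie_sum_B_add_sum_B_below
    (hrel2b : ∀ (i j k : Fin n) (p m : ZMod r), i < j → j < k →
      ⁅B i j p + B i k (p + m) + B j k m, B j k m⁆ = 0)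
    {l s t : Fin n} (hls : l < s) (hst : s < t) (p : ZMod r) :
    ⁅∑ q, B l s q + ∑ q, B l t q, B s t p⁆ = 0 :=
  lie_sum_add_sum_eq_zero (Equiv.addRight p) fun q =>
    lie_add_eq_zero_of_lie_add_add_self (hrel2b l s t q p hls hst)

theorem lie_sum_B_add_sum_B_between
    (hrel2a : ∀ (i j k : Fin n) (p m : ZMod r), i < j → j < k →
      ⁅B i j p + B i k (p + m) + B j k m, B i k (p + m)⁆ = 0)
    {s l t : Fin n} (hsl : s < l) (hlt : l < t) (p : ZMod r) :
    ⁅∑ q, B s l q + ∑ q, B l t q, B s t p⁆ = 0 :=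
  lie_sum_add_sum_eq_zero (Equiv.subLeft p) fun q => by
    have h := hrel2a s l t q (p - q) hsl hlt
    rw [add_sub_cancel, add_right_comm] at h
    exact lie_add_eq_zero_of_lie_add_add_self h

theorem lie_sum_B_add_sum_B_above
    (hrel2a : ∀ (i j k : Fin n) (p m : ZMod r), i < j → j < k →
      ⁅B i j p + B i k (p + m) + B j k m, B i k (p + m)⁆ = 0)
    (hrel2b : ∀ (i j k : Fin n) (p m : ZMod r), i < j → j < k →
      ⁅B i j p + B i k (p + m) + B j k m, B j k m⁆ = 0)
    {s t l : Fin n} (hst : s < t) (htl : t < l) (p : ZMod r) :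
    ⁅∑ q, B s l q + ∑ q, B t l q, B s t p⁆ = 0 := by
  rw [add_comm]
  refine lie_sum_add_sum_eq_zero (Equiv.addLeft p) fun m => ?_
  have h := lie_add_add_left_eq_zero (hrel2a s t l p m hst htl) (hrel2b s t l p m hst htl)
  rwa [add_assoc, add_lie, lie_self, zero_add, add_comm] at h

theorem lie_sum_B_min_max_add_sum_B_min_max
    (hrel2a : ∀ (i j k : Fin n) (p m : ZMod r), i < j → j < k →
      ⁅B i j p + B i k (p + m) + B j k m, B i k (p + m)⁆ = 0)
    (hrel2b : ∀ (i j k : Fin n) (p m : ZMod r), i < j → j < k →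
      ⁅B i j p + B i k (p + m) + B j k m, B j k m⁆ = 0)
    {s t l : Fin n} (hst : s < t) (hls : l ≠ s) (hlt : l ≠ t) (p : ZMod r) :
    ⁅∑ q, B (min l s) (max l s) q + ∑ q, B (min l t) (max l t) q, B s t p⁆ = 0 := by
  rcases lt_or_gt_of_ne hls with hl | hsl
  · rw [min_eq_left hl.le, max_eq_right hl.le, min_eq_left (hl.trans hst).le,
      max_eq_right (hl.trans hst).le]
    exact lie_sum_B_add_sum_B_below hrel2b hl hst p
  rcases lt_or_gt_of_ne hlt with hl | htl
  · rw [min_eq_right hsl.le, max_eq_left hsl.le, min_eq_left hl.le, max_eq_right hl.le]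
    exact lie_sum_B_add_sum_B_between hrel2a hsl hl p
  · rw [min_eq_right hsl.le, max_eq_left hsl.le, min_eq_right htl.le, max_eq_left htl.le]
    exact lie_sum_B_add_sum_B_above hrel2a hrel2b hst htl p

theorem lie_delta_Z
    (hrel1a : ∀ j l : Fin n, j < l → ⁅Z j + Z l + ∑ p : ZMod r, B j l p, Z l⁆ = 0)
    (hrel1b : ∀ (j l : Fin n) (p : ZMod r), j < l →
      ⁅Z j + Z l + ∑ q : ZMod r, B j l q, B j l p⁆ = 0)
    (hrel4 : ∀ (k i j : Fin n) (p : ZMod r), i < j → k ≠ i → k ≠ j → ⁅Z k, B i j p⁆ = 0)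
    (k : Fin n) : ⁅delta Z B, Z k⁆ = 0 := by
  have hdelta : delta Z B = Z k + ∑ l ∈ univ.erase k, (Z l + ∑ q, B (min l k) (max l k) q) +
      ∑ i ∈ univ.erase k, ∑ j ∈ univ.erase k with i < j, ∑ q, B i j q := by
    rw [delta, sum_sum_filter_lt_eq_sum_erase_add univ _ (mem_univ k),
      ← add_sum_erase univ Z (mem_univ k), sum_add_distrib]
    abel
  have hfar := lie_sum_sum_filter_lt_eq_zero (univ.erase k) (fun i j => ∑ q, B i j q)
    (y := Z k) fun i hi j hj hij => by
      rw [sum_lie]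
      exact sum_eq_zero fun q _ => by
        rw [← lie_skew, hrel4 k i j q hij (ne_of_mem_erase hi).symm (ne_of_mem_erase hj).symm,
          neg_zero]
  rw [hdelta, add_lie, add_lie, lie_self, zero_add, sum_lie, hfar, add_zero,
    sum_eq_zero fun l hl => lie_Z_add_sum_B_min_max hrel1a hrel1b (ne_of_mem_erase hl)]

theorem lie_delta_B
    (hrel1b : ∀ (j l : Fin n) (p : ZMod r), j < l →
      ⁅Z j + Z l + ∑ q : ZMod r, B j l q, B j l p⁆ = 0)
    (hrel2a : ∀ (i j k : Fin n) (p m : ZMod r), i < j → j < k →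
      ⁅B i j p + B i k (p + m) + B j k m, B i k (p + m)⁆ = 0)
    (hrel2b : ∀ (i j k : Fin n) (p m : ZMod r), i < j → j < k →
      ⁅B i j p + B i k (p + m) + B j k m, B j k m⁆ = 0)
    (hrel3 : ∀ (i j k l : Fin n) (p q : ZMod r), i < j → k < l →
      i ≠ k → i ≠ l → j ≠ k → j ≠ l → ⁅B i j p, B k l q⁆ = 0)
    (hrel4 : ∀ (k i j : Fin n) (p : ZMod r), i < j → k ≠ i → k ≠ j → ⁅Z k, B i j p⁆ = 0)
    {s t : Fin n} (hst : s < t) (p : ZMod r) : ⁅delta Z B, B s t p⁆ = 0 := by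
  set T := (univ.erase s).erase t
  have ht : t ∈ univ.erase s := mem_erase.2 ⟨hst.ne', mem_univ t⟩
  have hdelta : delta Z B = (Z s + Z t + ∑ q, B s t q) +
      ∑ l ∈ T, (Z l + (∑ q, B (min l s) (max l s) q + ∑ q, B (min l t) (max l t) q)) +
      ∑ i ∈ T, ∑ j ∈ T with i < j, ∑ q, B i j q := by
    rw [delta, sum_sum_filter_lt_eq_sum_erase_add univ _ (mem_univ s),
      sum_sum_filter_lt_eq_sum_erase_add _ _ ht, ← add_sum_erase univ Z (mem_univ s),
      ← add_sum_erase _ Z ht, ← add_sum_erase _ (fun l => ∑ q, B (min l s) (max l s) q) ht,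
      min_eq_right hst.le, max_eq_left hst.le, sum_add_distrib, sum_add_distrib]
    abel
  have mem_T : ∀ {l}, l ∈ T → l ≠ s ∧ l ≠ t := fun hl =>
    ⟨ne_of_mem_erase (mem_of_mem_erase hl), ne_of_mem_erase hl⟩
  have hfar := lie_sum_sum_filter_lt_eq_zero T (fun i j => ∑ q, B i j q)
    (y := B s t p) fun i hi j hj hij => by
      rw [sum_lie]
      exact sum_eq_zero fun q _ => hrel3 i j s t q p hij hst (mem_T hi).1 (mem_T hi).2
        (mem_T hj).1 (mem_T hj).2
  rw [hdelta, add_lie, add_lie, hrel1b s t p hst, zero_add, hfar, add_zero, sum_lie]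
  refine sum_eq_zero fun l hl => ?_
  rw [add_lie, hrel4 l s t p hst (mem_T hl).1 (mem_T hl).2, zero_add]
  exact lie_sum_B_min_max_add_sum_B_min_max hrel2a hrel2b hst (mem_T hl).1 (mem_T hl).2 p

end CohenPresentation

theorem monomial_Delta_central_general (r n : ℕ) [NeZero r]
    (L : Type*) [LieRing L]
    (Z : Fin n → L) (B : Fin n → Fin n → ZMod r → L)
    -- [Z_j + Z_l + Σ_p B_{j,l}^{(p)}, Y] = 0 for Y = Z_l and Y = B_{j,l}^{(p)}
    (hrel1a : ∀ j l : Fin n, j < l →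
      ⁅Z j + Z l + ∑ p : ZMod r, B j l p, Z l⁆ = 0)
    (hrel1b : ∀ (j l : Fin n) (p : ZMod r), j < l →
      ⁅Z j + Z l + ∑ q : ZMod r, B j l q, B j l p⁆ = 0)
    -- [B_{i,j}^{(p)} + B_{i,k}^{(q)} + B_{j,k}^{(m)}, Y] = 0 for Y = B_{i,k}^{(q)},
    -- B_{j,k}^{(m)}, with q ≡ p + m mod r
    (hrel2a : ∀ (i j k : Fin n) (p m : ZMod r), i < j → j < k →
      ⁅B i j p + B i k (p + m) + B j k m, B i k (p + m)⁆ = 0)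
    (hrel2b : ∀ (i j k : Fin n) (p m : ZMod r), i < j → j < k →
      ⁅B i j p + B i k (p + m) + B j k m, B j k m⁆ = 0)
    -- [B_{i,j}^{(p)}, B_{k,l}^{(q)}] = 0 for {i,j} ∩ {k,l} = ∅
    (hrel3 : ∀ (i j k l : Fin n) (p q : ZMod r), i < j → k < l →
      i ≠ k → i ≠ l → j ≠ k → j ≠ l → ⁅B i j p, B k l q⁆ = 0)
    -- [Z_k, B_{i,j}^{(p)}] = 0 for k ∉ {i,j}
    (hrel4 : ∀ (k i j : Fin n) (p : ZMod r), i < j → k ≠ i → k ≠ j →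
      ⁅Z k, B i j p⁆ = 0) :
    (∀ k : Fin n,
      ⁅(∑ l, Z l) + ∑ i, ∑ j ∈ univ.filter (fun j => i < j), ∑ p : ZMod r, B i j p,
        Z k⁆ = 0) ∧
    (∀ (s t : Fin n) (p : ZMod r), s < t →
      ⁅(∑ l, Z l) + ∑ i, ∑ j ∈ univ.filter (fun j => i < j), ∑ q : ZMod r, B i j q,
        B s t p⁆ = 0) :=
  ⟨CohenPresentation.lie_delta_Z hrel1a hrel1b hrel4, fun _ _ p hst =>
    CohenPresentation.lie_delta_B hrel1b hrel2a hrel2b hrel3 hrel4 hst p⟩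

/-- In the Lie algebra `gr₊(P(r,n))` of the fundamental group of the cyclic orbit
configuration space, presented by generators `Z k` (`1 ≤ k ≤ n`) and `B i j p`
(`1 ≤ i < j ≤ n`, `p ∈ ℤ/rℤ`) with the relations of Theorem 3.3 below, the element
`Δ(r,n) = Σₖ Z k + Σₚ Σ_{i<j} B i j p` is central: it commutes with every
generator. -/
theorem monomial_Delta_central (r n : ℕ) [NeZero r]
    (L : Type*) [LieRing L] [LieAlgebra ℤ L]
    (Z : Fin n → L) (B : Fin n → Fin n → ZMod r → L)
    -- [Z_j + Z_l + Σ_p B_{j,l}^{(p)}, Y] = 0 for Y = Z_l and Y = B_{j,l}^{(p)}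
    (hrel1a : ∀ j l : Fin n, j < l →
      ⁅Z j + Z l + ∑ p : ZMod r, B j l p, Z l⁆ = 0)
    (hrel1b : ∀ (j l : Fin n) (p : ZMod r), j < l →
      ⁅Z j + Z l + ∑ q : ZMod r, B j l q, B j l p⁆ = 0)
    -- [B_{i,j}^{(p)} + B_{i,k}^{(q)} + B_{j,k}^{(m)}, Y] = 0 for Y = B_{i,k}^{(q)},
    -- B_{j,k}^{(m)}, with q ≡ p + m mod r
    (hrel2a : ∀ (i j k : Fin n) (p m : ZMod r), i < j → j < k →
      ⁅B i j p + B i k (p + m) + B j k m, B i k (p + m)⁆ = 0)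
    (hrel2b : ∀ (i j k : Fin n) (p m : ZMod r), i < j → j < k →
      ⁅B i j p + B i k (p + m) + B j k m, B j k m⁆ = 0)
    -- [B_{i,j}^{(p)}, B_{k,l}^{(q)}] = 0 for {i,j} ∩ {k,l} = ∅
    (hrel3 : ∀ (i j k l : Fin n) (p q : ZMod r), i < j → k < l →
      i ≠ k → i ≠ l → j ≠ k → j ≠ l → ⁅B i j p, B k l q⁆ = 0)
    -- [Z_k, B_{i,j}^{(p)}] = 0 for k ∉ {i,j}
    (hrel4 : ∀ (k i j : Fin n) (p : ZMod r), i < j → k ≠ i → k ≠ j →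
      ⁅Z k, B i j p⁆ = 0) :
    (∀ k : Fin n,
      ⁅(∑ l, Z l) + ∑ i, ∑ j ∈ univ.filter (fun j => i < j), ∑ p : ZMod r, B i j p,
        Z k⁆ = 0) ∧
    (∀ (s t : Fin n) (p : ZMod r), s < t →
      ⁅(∑ l, Z l) + ∑ i, ∑ j ∈ univ.filter (fun j => i < j), ∑ q : ZMod r, B i j q,
        B s t p⁆ = 0) :=
  monomial_Delta_central_general r n L Z B hrel1a hrel1b hrel2a hrel2b hrel3 hrel4
end
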